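/- Let 1 < p < ∞ and 0 < ε < p − 1. If a metric two-measure space X = (X,d,ν,μ) (with μ doubling) supports a (q, p−ε)-Poincaré inequality, then X supports a maximal (q,p)-Poincaré inequality, with constant depending only on the doubling constant of μ, p, ε, and the constant K_{q,p−ε} of the assumed Poincaré inequality. -/

import Mathlib

open MeasureTheory Metric Set ENNReal NNReal

noncomputable section

/-- `ν` is doubling with constant `c`. -/
def IsDoubling {X : Type*} [MetricSpace X] [MeasurableSpace X]
    (ν : Measure X) (c : ℝ) : Prop :=
  ∀ (x : X) (r : ℝ), 0 < r → ν (Metric.ball x (2 * r)) ≤ ENNReal.ofReal c * ν (Metric.ball x r)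

/-- `ν` is positive and finite on all balls. -/
def FinitePosOnBalls {X : Type*} [MetricSpace X] [MeasurableSpace X]
    (ν : Measure X) : Prop :=
  ∀ (x : X) (r : ℝ), 0 < r → 0 < ν (Metric.ball x r) ∧ ν (Metric.ball x r) < ⊤

/-- The `(q,p)`-balance condition with constant `C`:
`(diam B'/diam B) (ν B'/ν B)^{1/q} ≤ C^{1/p} (μ B'/μ B)^{1/p}` for all balls
`B`, `B' = B(x',r')` with `x' ∈ B` and `0 < r' ≤ diam B`. -/
def Balance {X : Type*} [MetricSpace X] [MeasurableSpace X]
    (ν μ : Measure X) (q p C : ℝ) : Prop :=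
  ∀ (x : X) (R : ℝ) (x' : X) (r' : ℝ), 0 < R → x' ∈ Metric.ball x R → 0 < r' →
    r' ≤ Metric.diam (Metric.ball x R) →
    (Metric.diam (Metric.ball x' r') / Metric.diam (Metric.ball x R)) *
        ((ν (Metric.ball x' r')).toReal / (ν (Metric.ball x R)).toReal) ^ (1 / q)
      ≤ C ^ (1 / p) *
        ((μ (Metric.ball x' r')).toReal / (μ (Metric.ball x R)).toReal) ^ (1 / p)

/-- The `p`-balance condition with constant `C`:
`(diam B'/diam B)^p (ν B'/ν B) ≤ C (μ B'/μ B)` for all balls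
`B`, `B' = B(x',r')` with `x' ∈ B` and `0 < r' ≤ diam B`. -/
def PBalance {X : Type*} [MetricSpace X] [MeasurableSpace X]
    (ν μ : Measure X) (p C : ℝ) : Prop :=
  ∀ (x : X) (R : ℝ) (x' : X) (r' : ℝ), 0 < R → x' ∈ Metric.ball x R → 0 < r' →
    r' ≤ Metric.diam (Metric.ball x R) →
    (Metric.diam (Metric.ball x' r') / Metric.diam (Metric.ball x R)) ^ p *
        ((ν (Metric.ball x' r')).toReal / (ν (Metric.ball x R)).toReal)
      ≤ C * ((μ (Metric.ball x' r')).toReal / (μ (Metric.ball x R)).toReal)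

/-- A (rectifiable, arc-length parametrized) curve in `X`: a `1`-Lipschitz map
from `[0, len]` to `X` with `len > 0`. -/
structure Curve (X : Type*) [MetricSpace X] where
  len : ℝ
  len_pos : 0 < len
  toFun : ℝ → X
  speed : ∀ s ∈ Set.Icc (0 : ℝ) len, ∀ t ∈ Set.Icc (0 : ℝ) len,
    dist (toFun s) (toFun t) ≤ |s - t|

/-- The curve integral `∫_γ g ds` for an arc-length parametrized curve. -/
def curveLint {X : Type*} [MetricSpace X] (γ : Curve X) (g : X → ℝ≥0∞) : ℝ≥0∞ :=
  ∫⁻ t in Set.Icc (0 : ℝ) γ.len, g (γ.toFun t)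

/-- `g` is a `p`-weak upper gradient of `u` (w.r.t. the measure `μ`): the upper
gradient inequality `|u(γ(0)) - u(γ(ℓ_γ))| ≤ ∫_γ g ds` holds for `p`-almost every
curve, i.e. there is a Borel `ρ ∈ L^p_loc(X; dμ)` such that `∫_γ ρ ds = ∞` for every
exceptional curve. -/
def IsWeakUpperGradient {X : Type*} [MetricSpace X] [MeasurableSpace X]
    (μ : Measure X) (p : ℝ) (u : X → ℝ) (g : X → ℝ≥0∞) : Prop :=
  Measurable g ∧ ∃ ρ : X → ℝ≥0∞, Measurable ρ ∧
    (∀ (x : X) (r : ℝ), 0 < r → ∫⁻ y in Metric.ball x r, ρ y ^ p ∂μ < ⊤) ∧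
    ∀ γ : Curve X, curveLint γ ρ ≠ ⊤ →
      ENNReal.ofReal |u (γ.toFun 0) - u (γ.toFun γ.len)| ≤ curveLint γ g

/-- The normalized `L^q(ν)`-oscillation of `u` on the ball `B(z,r)`:
`((diam B)^{-q} ⨍_B |u - u_{B;ν}|^q dν)^{1/q}`, as an extended real. -/
def ballOsc {X : Type*} [MetricSpace X] [MeasurableSpace X]
    (ν : Measure X) (q : ℝ) (u : X → ℝ) (z : X) (r : ℝ) : ℝ≥0∞ :=
  ((∫⁻ y in Metric.ball z r,
      ENNReal.ofReal |u y - ⨍ w in Metric.ball z r, u w ∂ν| ^ q ∂ν) /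
    (ENNReal.ofReal (Metric.diam (Metric.ball z r) ^ q) * ν (Metric.ball z r))) ^ (1 / q)

/-- The sharp maximal function `M^{ν,q}_𝓑 u` associated with a family `𝓑` of balls
(given by center-radius pairs): the sup of normalized oscillations over balls of the
family containing the point. -/
def sharpMax {X : Type*} [MetricSpace X] [MeasurableSpace X]
    (ν : Measure X) (q : ℝ) (𝓑 : Set (X × ℝ)) (u : X → ℝ) (x : X) : ℝ≥0∞ :=
  ⨆ b ∈ 𝓑, ⨆ _ : x ∈ Metric.ball b.1 b.2, ballOsc ν q u b.1 b.2

/-- The `(q,p)`-Poincaré inequality with constant `K`. -/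
def PoincareIneq {X : Type*} [MetricSpace X] [MeasurableSpace X]
    (ν μ : Measure X) (q p K : ℝ) : Prop :=
  ∀ (x : X) (r : ℝ), 0 < r →
    ∀ u : X → ℝ, (∃ L : ℝ≥0, LipschitzWith L u) →
    ∀ g : X → ℝ≥0∞, IsWeakUpperGradient μ p u g →
    ((ν (Metric.ball x r))⁻¹ *
        ∫⁻ y in Metric.ball x r,
          ENNReal.ofReal |u y - ⨍ z in Metric.ball x r, u z ∂ν| ^ q ∂ν) ^ (1 / q)
      ≤ ENNReal.ofReal (K ^ (1 / p) * Metric.diam (Metric.ball x r)) *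
        ((μ (Metric.ball x r))⁻¹ * ∫⁻ y in Metric.ball x r, g y ^ p ∂μ) ^ (1 / p)

/-- The maximal `(q,p)`-Poincaré inequality with constant `C`. -/
def MaxPoincareIneq {X : Type*} [MetricSpace X] [MeasurableSpace X]
    (ν μ : Measure X) (q p C : ℝ) : Prop :=
  ∀ (x₀ : X) (r₀ : ℝ), 0 < r₀ →
    ∀ u : X → ℝ, (∃ L : ℝ≥0, LipschitzWith L u) →
    ∀ g : X → ℝ≥0∞, IsWeakUpperGradient μ p u g →
    ∫⁻ x in Metric.ball x₀ r₀,
        (sharpMax ν q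
          {b : X × ℝ | 0 < b.2 ∧ Metric.ball b.1 (2 * b.2) ⊆ Metric.ball x₀ r₀}
          u x) ^ p ∂μ
      ≤ ENNReal.ofReal C * ∫⁻ x in Metric.ball x₀ r₀, g x ^ p ∂μ

/-!
Write `p' = p - ε` and `s = p / p' > 1`. On every ball `B` of the family `𝓑₀`, the
`(q, p')`-Poincaré inequality bounds the normalized oscillation of `u` by
`K^{1/p'} (⨍_B g^{p'} dμ)^{1/p'}`, so the sharp maximal function is dominated pointwise by
`K^{1/p'} (M g^{p'})^{1/p'}`, where `M` is the noncentered maximal operator over `𝓑₀`.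
Raising this to the power `p`, it remains to bound `∫_{B₀} (M g^{p'})^s dμ` by `∫_{B₀} g^p dμ`,
i.e. to prove that `M` is bounded on `L^s`. The Vitali covering lemma and the doubling property
give the weak-type `(1,1)` estimate for `M`; applying it to `f` cut off below height `t/2` and
integrating over `t` (layer cake formula and Tonelli) gives the strong-type `(s,s)` estimate
with constant `2^s c_μ³ s/(s-1)`.
-/

lemma lintegral_Ioo_ofReal_rpow {r : ℝ} (hr : -1 < r) {A : ℝ} (hA : 0 ≤ A) :
    ∫⁻ t in Ioo (0 : ℝ) A, ENNReal.ofReal (t ^ r) = ENNReal.ofReal (A ^ (r + 1) / (r + 1)) := by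
  have hint : IntegrableOn (fun t : ℝ => t ^ r) (Ioo 0 A) :=
    ((intervalIntegrable_iff_integrableOn_Ioc_of_le hA).1
      (intervalIntegral.intervalIntegrable_rpow' hr)).mono_set Ioo_subset_Ioc_self
  have hnn : 0 ≤ᵐ[volume.restrict (Ioo 0 A)] fun t : ℝ => t ^ r :=
    (ae_restrict_mem measurableSet_Ioo).mono fun t ht => Real.rpow_nonneg ht.1.le r
  rw [← ofReal_integral_eq_lintegral_ofReal hint hnn, ← integral_Ioc_eq_integral_Ioo,
    ← intervalIntegral.integral_of_le hA, integral_rpow (Or.inl hr),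
    Real.zero_rpow (by linarith), sub_zero]

lemma lintegral_Ioi_ofReal_rpow_eq_top {r : ℝ} (hr : -1 < r) :
    ∫⁻ t in Ioi (0 : ℝ), ENNReal.ofReal (t ^ r) = ∞ := by
  refine top_unique (le_trans (top_le_iff.2 ?_) (lintegral_mono_set (Ioi_subset_Ioi zero_le_one)))
  by_contra hfin
  have hint : IntegrableOn (fun t : ℝ => t ^ r) (Ioi 1) := by
    refine ⟨(continuousOn_id.rpow_const fun t ht =>
      Or.inl (zero_lt_one.trans ht).ne').aestronglyMeasurable measurableSet_Ioi, ?_⟩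
    rw [hasFiniteIntegral_iff_ofReal]
    · exact lt_top_iff_ne_top.2 hfin
    · exact (ae_restrict_mem measurableSet_Ioi).mono fun t ht =>
        Real.rpow_nonneg (zero_le_one.trans ht.le) r
  exact lt_asymm hr ((integrableOn_Ioi_rpow_iff zero_lt_one).1 hint)

lemma lintegral_Ioi_indicator_ofReal_lt_rpow {r : ℝ} (hr : -1 < r) (a : ℝ≥0∞) :
    ∫⁻ t in Ioi (0 : ℝ), {t : ℝ | ENNReal.ofReal t < a}.indicator
        (fun t => ENNReal.ofReal (t ^ r)) t = ENNReal.ofReal (r + 1)⁻¹ * a ^ (r + 1) := by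
  have hr1 : 0 < r + 1 := by linarith
  rcases eq_or_ne a ∞ with rfl | ha
  · simp only [ofReal_lt_top, ofPred_true, indicator_univ]
    rw [lintegral_Ioi_ofReal_rpow_eq_top hr, top_rpow_of_pos hr1,
      mul_top (by simpa using hr1)]
  have hset : {t : ℝ | ENNReal.ofReal t < a} ∩ Ioi 0 = Ioo 0 a.toReal := by
    ext t
    simp only [mem_inter_iff, mem_ofPred_eq, mem_Ioi, mem_Ioo]
    constructor
    · rintro ⟨hta, ht⟩
      exact ⟨ht, (ofReal_lt_iff_lt_toReal ht.le ha).1 hta⟩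
    · rintro ⟨ht, hta⟩
      exact ⟨(ofReal_lt_iff_lt_toReal ht.le ha).2 hta, ht⟩
  rw [lintegral_indicator (measurableSet_lt measurable_ofReal measurable_const),
    Measure.restrict_restrict (measurableSet_lt measurable_ofReal measurable_const), hset,
    lintegral_Ioo_ofReal_rpow hr toReal_nonneg, div_eq_inv_mul,
    ENNReal.ofReal_mul (inv_nonneg.2 hr1.le), ← ofReal_rpow_of_nonneg toReal_nonneg hr1.le,
    ofReal_toReal ha]

theorem lintegral_rpow_eq_lintegral_meas_ofReal_lt_mul {α : Type*} [MeasurableSpace α]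
    (ν : Measure α) [SFinite ν] {F : α → ℝ≥0∞} (hF : Measurable F) {s : ℝ} (hs : 0 < s) :
    ∫⁻ x, F x ^ s ∂ν =
      ENNReal.ofReal s *
        ∫⁻ t in Ioi 0, ν {x | ENNReal.ofReal t < F x} * ENNReal.ofReal (t ^ (s - 1)) := by
  have hpow : ∀ x, F x ^ s = ENNReal.ofReal s * ∫⁻ t in Ioi (0 : ℝ),
      {t : ℝ | ENNReal.ofReal t < F x}.indicator (fun t => ENNReal.ofReal (t ^ (s - 1))) t := by
    intro x
    rw [lintegral_Ioi_indicator_ofReal_lt_rpow (by linarith) (F x), sub_add_cancel, ← mul_assoc,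
      ← ENNReal.ofReal_mul hs.le, mul_inv_cancel₀ hs.ne', ENNReal.ofReal_one, one_mul]
  have hmeas : Measurable (Function.uncurry fun (x : α) (t : ℝ) =>
      {t : ℝ | ENNReal.ofReal t < F x}.indicator (fun t => ENNReal.ofReal (t ^ (s - 1))) t) :=
    (measurable_snd.pow_const _).ennreal_ofReal.indicator
      (measurableSet_lt measurable_snd.ennreal_ofReal (hF.comp measurable_fst))
  simp_rw [hpow]
  rw [lintegral_const_mul' _ _ ofReal_ne_top, lintegral_lintegral_swap hmeas.aemeasurable]
  congr 1
  refine lintegral_congr fun t => ?_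
  rw [mul_comm, ← lintegral_indicator_const (measurableSet_lt measurable_const hF)]
  rfl

lemma lintegral_Ioi_indicator_rpow_mul {s : ℝ} (hs : 1 < s) (b : ℝ≥0∞) :
    ∫⁻ t in Ioi (0 : ℝ), {t : ℝ | ENNReal.ofReal t < 2 * b}.indicator
        (fun t => ENNReal.ofReal (t ^ (s - 2))) t * b =
      ENNReal.ofReal (s - 1)⁻¹ * 2 ^ (s - 1) * b ^ s := by
  rw [lintegral_mul_const _ (Measurable.indicator (by fun_prop)
      (measurableSet_lt measurable_ofReal measurable_const)),
    lintegral_Ioi_indicator_ofReal_lt_rpow (by linarith), show s - 2 + 1 = s - 1 by ring,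
    mul_rpow_of_nonneg _ _ (by linarith), mul_assoc, mul_assoc]
  nth_rw 2 [← ENNReal.rpow_one b]
  rw [← ENNReal.rpow_add_of_nonneg _ _ (by linarith) zero_le_one, sub_add_cancel, mul_assoc]

/-- A weak-type bound whose right-hand side only sees `h` above height `t/2` already gives the
strong `L^s` bound (the Marcinkiewicz argument). -/
theorem lintegral_rpow_le_of_meas_ofReal_lt_le {α : Type*} [MeasurableSpace α] {ν : Measure α}
    [SFinite ν] {F h : α → ℝ≥0∞} (hF : Measurable F) (hh : Measurable h) {s : ℝ} (hs : 1 < s)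
    {A : ℝ≥0∞} (hweak : ∀ t : ℝ, 0 < t → ν {x | ENNReal.ofReal t < F x} ≤
      A * (ENNReal.ofReal t)⁻¹ * ∫⁻ y in {y | ENNReal.ofReal t < 2 * h y}, h y ∂ν) :
    ∫⁻ x, F x ^ s ∂ν ≤ A * ENNReal.ofReal (s / (s - 1)) * 2 ^ (s - 1) * ∫⁻ x, h x ^ s ∂ν := by
  set G : α → ℝ → ℝ≥0∞ := fun y t =>
    {t : ℝ | ENNReal.ofReal t < 2 * h y}.indicator (fun t => ENNReal.ofReal (t ^ (s - 2))) t * h y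
  have hG : Measurable (Function.uncurry G) :=
    ((measurable_snd.pow_const _).ennreal_ofReal.indicator
      (measurableSet_lt measurable_snd.ennreal_ofReal ((hh.const_mul 2).comp measurable_fst))).mul
      (hh.comp measurable_fst)
  have hlevel : ∀ t : ℝ, 0 < t → ν {x | ENNReal.ofReal t < F x} * ENNReal.ofReal (t ^ (s - 1)) ≤
      A * ∫⁻ y, G y t ∂ν := by
    intro t ht
    have hpow : (ENNReal.ofReal t)⁻¹ * ENNReal.ofReal (t ^ (s - 1)) =
        ENNReal.ofReal (t ^ (s - 2)) := by
      rw [← ofReal_inv_of_pos ht, ← ENNReal.ofReal_mul (inv_nonneg.2 ht.le),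
        show s - 2 = -1 + (s - 1) by ring, Real.rpow_add ht, Real.rpow_neg_one]
    calc ν {x | ENNReal.ofReal t < F x} * ENNReal.ofReal (t ^ (s - 1))
        ≤ A * (ENNReal.ofReal t)⁻¹ * (∫⁻ y in {y | ENNReal.ofReal t < 2 * h y}, h y ∂ν) *
            ENNReal.ofReal (t ^ (s - 1)) := by gcongr; exact hweak t ht
      _ = A * ∫⁻ y in {y | ENNReal.ofReal t < 2 * h y}, h y * ENNReal.ofReal (t ^ (s - 2)) ∂ν := by
        rw [lintegral_mul_const' _ _ ofReal_ne_top, ← hpow]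
        ring
      _ = A * ∫⁻ y, G y t ∂ν := by
        rw [← lintegral_indicator (measurableSet_lt measurable_const (hh.const_mul 2))]
        congr 1
        refine lintegral_congr fun y => ?_
        simp only [G, indicator_apply, mem_ofPred_eq]
        split_ifs <;> simp [mul_comm]
  calc ∫⁻ x, F x ^ s ∂ν
      = ENNReal.ofReal s * ∫⁻ t in Ioi 0, ν {x | ENNReal.ofReal t < F x} *
          ENNReal.ofReal (t ^ (s - 1)) :=
        lintegral_rpow_eq_lintegral_meas_ofReal_lt_mul ν hF (by linarith)
    _ ≤ ENNReal.ofReal s * ∫⁻ t in Ioi 0, A * ∫⁻ y, G y t ∂ν := by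
        gcongr ENNReal.ofReal s * ?_
        exact setLIntegral_mono' measurableSet_Ioi fun t ht => hlevel t ht
    _ = ENNReal.ofReal s * A * ∫⁻ y, (∫⁻ t in Ioi 0, G y t) ∂ν := by
        have hmeas : Measurable fun t => ∫⁻ y, G y t ∂ν := hG.lintegral_prod_left'
        rw [lintegral_const_mul _ hmeas, lintegral_lintegral_swap hG.aemeasurable, mul_assoc]
    _ = A * ENNReal.ofReal (s / (s - 1)) * 2 ^ (s - 1) * ∫⁻ x, h x ^ s ∂ν := by
        simp_rw [G, lintegral_Ioi_indicator_rpow_mul hs]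
        rw [lintegral_const_mul' _ _
            (mul_ne_top ofReal_ne_top (rpow_ne_top_of_nonneg (by linarith) (by norm_num))),
          div_eq_mul_inv, ENNReal.ofReal_mul (by linarith)]
        ring

section MaximalFunction

variable {X : Type*} [PseudoMetricSpace X] [MeasurableSpace X] {μ : Measure X}
  {𝓑 : Set (X × ℝ)} {f : X → ℝ≥0∞} {x : X}

def maximalFunction (μ : Measure X) (𝓑 : Set (X × ℝ)) (f : X → ℝ≥0∞) (x : X) : ℝ≥0∞ :=
  ⨆ b ∈ 𝓑, ⨆ _ : x ∈ ball b.1 b.2, (μ (ball b.1 b.2))⁻¹ * ∫⁻ y in ball b.1 b.2, f y ∂μ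

lemma lt_maximalFunction_iff {a : ℝ≥0∞} :
    a < maximalFunction μ 𝓑 f x ↔ ∃ b ∈ 𝓑, x ∈ ball b.1 b.2 ∧
      a < (μ (ball b.1 b.2))⁻¹ * ∫⁻ y in ball b.1 b.2, f y ∂μ := by
  simp only [maximalFunction, lt_iSup_iff, exists_prop]

lemma le_maximalFunction {b : X × ℝ} (hb : b ∈ 𝓑) (hx : x ∈ ball b.1 b.2) :
    (μ (ball b.1 b.2))⁻¹ * ∫⁻ y in ball b.1 b.2, f y ∂μ ≤ maximalFunction μ 𝓑 f x :=
  le_iSup₂_of_le b hb (le_iSup_of_le hx le_rfl)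

lemma measurable_maximalFunction [OpensMeasurableSpace X] :
    Measurable (maximalFunction μ 𝓑 f) := by
  refine measurable_of_Ioi fun a => ?_
  have hopen : maximalFunction μ 𝓑 f ⁻¹' Ioi a = ⋃ b ∈ {b ∈ 𝓑 |
      a < (μ (ball b.1 b.2))⁻¹ * ∫⁻ y in ball b.1 b.2, f y ∂μ}, ball b.1 b.2 := by
    ext x
    simp only [mem_preimage, mem_Ioi, lt_maximalFunction_iff, mem_iUnion, exists_prop,
      mem_ofPred_eq]
    tauto
  rw [hopen]
  exact (isOpen_biUnion fun b _ => isOpen_ball).measurableSet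

lemma maximalFunction_le_indicator_add
    (h𝓑 : ∀ b ∈ 𝓑, μ (ball b.1 b.2) ≠ 0 ∧ μ (ball b.1 b.2) ≠ ∞) (a : ℝ≥0∞) (x : X) :
    maximalFunction μ 𝓑 f x ≤ maximalFunction μ 𝓑 ({y | a < f y}.indicator f) x + a := by
  refine iSup₂_le fun b hb => iSup_le fun hx => ?_
  set B := ball b.1 b.2
  have hle : ∀ y, f y ≤ {y | a < f y}.indicator f y + a := by
    intro y
    by_cases hy : a < f y
    · rw [indicator_of_mem (show y ∈ {y | a < f y} from hy)]
      exact le_self_add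
    · rw [indicator_of_notMem (show y ∉ {y | a < f y} from hy), zero_add]
      exact not_lt.1 hy
  calc (μ B)⁻¹ * ∫⁻ y in B, f y ∂μ
      ≤ (μ B)⁻¹ * (∫⁻ y in B, {y | a < f y}.indicator f y ∂μ + a * μ B) := by
        gcongr
        calc ∫⁻ y in B, f y ∂μ ≤ ∫⁻ y in B, ({y | a < f y}.indicator f y + a) ∂μ :=
              lintegral_mono hle
          _ = _ := by rw [lintegral_add_right _ measurable_const, setLIntegral_const]
    _ = (μ B)⁻¹ * ∫⁻ y in B, {y | a < f y}.indicator f y ∂μ + a := by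
        rw [mul_add, mul_left_comm, ENNReal.inv_mul_cancel (h𝓑 b hb).1 (h𝓑 b hb).2, mul_one]
    _ ≤ maximalFunction μ 𝓑 ({y | a < f y}.indicator f) x + a := by
        gcongr
        exact le_maximalFunction hb hx

end MaximalFunction

lemma ball_eq_ball_min_of_ball_subset_ball {X : Type*} [PseudoMetricSpace X] {z x₀ : X}
    {r r₀ : ℝ} (hr : 0 < r) (hsub : ball z r ⊆ ball x₀ r₀) :
    ball z r = ball z (min r (2 * r₀)) := by
  refine Subset.antisymm (fun y hy => ?_) (ball_subset_ball (min_le_left _ _))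
  have hz : dist z x₀ < r₀ := hsub (mem_ball_self hr)
  have hy₀ : dist y x₀ < r₀ := hsub hy
  refine lt_min (mem_ball.1 hy) ?_
  calc dist y z ≤ dist y x₀ + dist z x₀ := dist_triangle_right _ _ _
    _ < 2 * r₀ := by linarith

lemma Set.PairwiseDisjoint.countable_of_measure_ball_pos {X : Type*} [PseudoMetricSpace X]
    [MeasurableSpace X] [OpensMeasurableSpace X] {μ : Measure X} {u : Set (X × ℝ)}
    (hdisj : u.PairwiseDisjoint fun b => ball b.1 b.2) {S : Set X} (hS : μ S ≠ ∞)
    (hpos : ∀ b ∈ u, 0 < μ (ball b.1 b.2)) (hsub : ∀ b ∈ u, ball b.1 b.2 ⊆ S) : u.Countable := by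
  have hcount := Measure.countable_meas_pos_of_disjoint_of_meas_iUnion_ne_top μ
    (As := fun b : u => ball b.1.1 b.1.2) (fun _ => measurableSet_ball)
    (fun b b' hbb' => hdisj b.2 b'.2 (Subtype.coe_injective.ne hbb'))
    (ne_top_of_le_ne_top hS (measure_mono (iUnion_subset fun b => hsub b b.2)))
  rw [← countable_coe_iff, ← countable_univ_iff]
  convert hcount
  exact (eq_univ_of_forall fun b : u => hpos b b.2).symm

lemma IsDoubling.measure_closedBall_four_mul_le {X : Type*} [MetricSpace X] [MeasurableSpace X]
    {μ : Measure X} {c : ℝ} (hdo : IsDoubling μ c) (z : X) {r : ℝ} (hr : 0 < r) :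
    μ (closedBall z (4 * r)) ≤ ENNReal.ofReal c ^ 3 * μ (ball z r) := by
  have h2 := hdo z r hr
  have h4 := hdo z (2 * r) (by positivity)
  have h8 := hdo z (4 * r) (by positivity)
  rw [show 2 * (2 * r) = 4 * r by ring] at h4
  calc μ (closedBall z (4 * r)) ≤ μ (ball z (2 * (4 * r))) :=
        measure_mono (closedBall_subset_ball (by linarith))
    _ ≤ ENNReal.ofReal c * (ENNReal.ofReal c * (ENNReal.ofReal c * μ (ball z r))) :=
        h8.trans (mul_le_mul_right (h4.trans (mul_le_mul_right h2 _)) _)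
    _ = ENNReal.ofReal c ^ 3 * μ (ball z r) := by ring

section MaximalInequalities

variable {X : Type*} [MetricSpace X] [MeasurableSpace X] [OpensMeasurableSpace X]
  {μ : Measure X} {c : ℝ} {x₀ : X} {r₀ : ℝ} {𝓑 : Set (X × ℝ)}

lemma measure_biUnion_ball_le_of_mul_le_setLIntegral (hμ : FinitePosOnBalls μ)
    (hdo : IsDoubling μ c) {S : Set X} (hS : μ S ≠ ∞) {R : ℝ} {t : Set (X × ℝ)}
    (ht : ∀ b ∈ t, 0 < b.2 ∧ b.2 ≤ R ∧ ball b.1 b.2 ⊆ S) {f : X → ℝ≥0∞} {a : ℝ≥0∞}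
    (ha0 : a ≠ 0) (ha : a ≠ ∞)
    (hf : ∀ b ∈ t, a * μ (ball b.1 b.2) ≤ ∫⁻ y in ball b.1 b.2, f y ∂μ) :
    μ (⋃ b ∈ t, ball b.1 b.2) ≤ ENNReal.ofReal c ^ 3 * a⁻¹ * ∫⁻ y in S, f y ∂μ := by
  obtain ⟨u, hut, hdisj, hcov⟩ :=
    Vitali.exists_disjoint_subfamily_covering_enlargement_closedBall t Prod.fst Prod.snd R
      (fun b hb => (ht b hb).2.1) 4 (by norm_num)
  have hdisj' : u.PairwiseDisjoint fun b => ball b.1 b.2 :=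
    hdisj.mono fun _ => ball_subset_closedBall
  have hu : u.Countable := hdisj'.countable_of_measure_ball_pos hS
    (fun b hb => (hμ _ _ (ht b (hut hb)).1).1) fun b hb => (ht b (hut hb)).2.2
  calc μ (⋃ b ∈ t, ball b.1 b.2) ≤ μ (⋃ b ∈ u, closedBall b.1 (4 * b.2)) := by
        refine measure_mono (iUnion₂_subset fun b hb => ?_)
        obtain ⟨b', hb'u, hsub⟩ := hcov b hb
        exact ball_subset_closedBall.trans (hsub.trans
          (subset_biUnion_of_mem (u := fun b : X × ℝ => closedBall b.1 (4 * b.2)) hb'u))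
    _ ≤ ∑' b : u, μ (closedBall b.1.1 (4 * b.1.2)) := measure_biUnion_le μ hu _
    _ ≤ ∑' b : u, ENNReal.ofReal c ^ 3 * a⁻¹ * ∫⁻ y in ball b.1.1 b.1.2, f y ∂μ := by
        refine ENNReal.tsum_le_tsum fun b => ?_
        have hb := hut b.2
        calc μ (closedBall b.1.1 (4 * b.1.2)) ≤ ENNReal.ofReal c ^ 3 * μ (ball b.1.1 b.1.2) :=
              hdo.measure_closedBall_four_mul_le _ (ht _ hb).1
          _ ≤ ENNReal.ofReal c ^ 3 * a⁻¹ * ∫⁻ y in ball b.1.1 b.1.2, f y ∂μ := by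
              rw [mul_assoc, ← ENNReal.inv_mul_cancel_left ha0 ha (b := μ (ball b.1.1 b.1.2))]
              gcongr
              exact hf _ hb
    _ = ENNReal.ofReal c ^ 3 * a⁻¹ * ∫⁻ y in ⋃ b ∈ u, ball b.1 b.2, f y ∂μ := by
        rw [ENNReal.tsum_mul_left, lintegral_biUnion hu (fun _ _ => measurableSet_ball) hdisj']
    _ ≤ ENNReal.ofReal c ^ 3 * a⁻¹ * ∫⁻ y in S, f y ∂μ := by
        gcongr
        exact iUnion₂_subset fun b hb => (ht b (hut hb)).2.2

theorem meas_lt_maximalFunction_le (hμ : FinitePosOnBalls μ) (hdo : IsDoubling μ c)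
    (hr₀ : 0 < r₀) (h𝓑 : ∀ b ∈ 𝓑, 0 < b.2 ∧ ball b.1 b.2 ⊆ ball x₀ r₀) (f : X → ℝ≥0∞)
    {a : ℝ≥0∞} (ha0 : a ≠ 0) (ha : a ≠ ∞) :
    μ {x | a < maximalFunction μ 𝓑 f x} ≤
      ENNReal.ofReal c ^ 3 * a⁻¹ * ∫⁻ y in ball x₀ r₀, f y ∂μ := by
  set t := {b : X × ℝ | 0 < b.2 ∧ b.2 ≤ 2 * r₀ ∧ ball b.1 b.2 ⊆ ball x₀ r₀ ∧
    a * μ (ball b.1 b.2) ≤ ∫⁻ y in ball b.1 b.2, f y ∂μ}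
  refine (measure_mono ?_).trans (measure_biUnion_ball_le_of_mul_le_setLIntegral hμ hdo
    (hμ x₀ r₀ hr₀).2.ne (t := t) (fun b hb => ⟨hb.1, hb.2.1, hb.2.2.1⟩) ha0 ha
    fun b hb => hb.2.2.2)
  intro x hx
  obtain ⟨⟨z, r⟩, hb, hxb, hlt⟩ := lt_maximalFunction_iff.1 hx
  have hball := ball_eq_ball_min_of_ball_subset_ball (h𝓑 _ hb).1 (h𝓑 _ hb).2
  refine mem_biUnion (x := (z, min r (2 * r₀))) ⟨lt_min (h𝓑 _ hb).1 (by positivity),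
    min_le_right _ _, hball ▸ (h𝓑 _ hb).2, ?_⟩ (hball ▸ hxb)
  rw [← hball]
  exact ENNReal.mul_le_of_le_div (by rw [ENNReal.div_eq_inv_mul]; exact hlt.le)

theorem setLIntegral_maximalFunction_rpow_le (hμ : FinitePosOnBalls μ) (hdo : IsDoubling μ c)
    (hr₀ : 0 < r₀) (h𝓑 : ∀ b ∈ 𝓑, 0 < b.2 ∧ ball b.1 b.2 ⊆ ball x₀ r₀) {f : X → ℝ≥0∞}
    (hf : Measurable f) {s : ℝ} (hs : 1 < s) :
    ∫⁻ x in ball x₀ r₀, maximalFunction μ 𝓑 f x ^ s ∂μ ≤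
      2 * ENNReal.ofReal c ^ 3 * ENNReal.ofReal (s / (s - 1)) * 2 ^ (s - 1) *
        ∫⁻ x in ball x₀ r₀, f x ^ s ∂μ := by
  have : IsFiniteMeasure (μ.restrict (ball x₀ r₀)) :=
    ⟨by rw [Measure.restrict_apply_univ]; exact (hμ x₀ r₀ hr₀).2⟩
  refine lintegral_rpow_le_of_meas_ofReal_lt_le measurable_maximalFunction hf hs fun t ht => ?_
  set a := ENNReal.ofReal t / 2
  have ha0 : a ≠ 0 := by simpa [a] using ht
  have ha : a ≠ ∞ := div_ne_top ofReal_ne_top two_ne_zero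
  have hlevel : {y | a < f y} = {y | ENNReal.ofReal t < 2 * f y} := by
    ext y
    rw [mem_ofPred_eq, mem_ofPred_eq, ENNReal.div_lt_iff (Or.inl two_ne_zero) (Or.inl ofNat_ne_top),
      mul_comm]
  have hsub : {x | ENNReal.ofReal t < maximalFunction μ 𝓑 f x} ⊆
      {x | a < maximalFunction μ 𝓑 ({y | a < f y}.indicator f) x} := by
    intro x hx
    by_contra hle
    refine not_lt.2 ?_ (mem_ofPred_eq ▸ hx)
    calc maximalFunction μ 𝓑 f x ≤ maximalFunction μ 𝓑 ({y | a < f y}.indicator f) x + a :=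
          maximalFunction_le_indicator_add (fun b hb => ⟨(hμ _ _ (h𝓑 b hb).1).1.ne',
            (hμ _ _ (h𝓑 b hb).1).2.ne⟩) a x
      _ ≤ a + a := by gcongr; exact not_lt.1 hle
      _ = ENNReal.ofReal t := ENNReal.add_halves _
  calc μ.restrict (ball x₀ r₀) {x | ENNReal.ofReal t < maximalFunction μ 𝓑 f x}
      ≤ μ {x | a < maximalFunction μ 𝓑 ({y | a < f y}.indicator f) x} :=
        (Measure.restrict_apply_le _ _).trans (measure_mono hsub)
    _ ≤ ENNReal.ofReal c ^ 3 * a⁻¹ * ∫⁻ y in ball x₀ r₀, {y | a < f y}.indicator f y ∂μ :=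
        meas_lt_maximalFunction_le hμ hdo hr₀ h𝓑 _ ha0 ha
    _ = 2 * ENNReal.ofReal c ^ 3 * (ENNReal.ofReal t)⁻¹ *
          ∫⁻ y in {y | ENNReal.ofReal t < 2 * f y}, f y ∂μ.restrict (ball x₀ r₀) := by
        rw [lintegral_indicator (measurableSet_lt measurable_const hf), hlevel,
          ENNReal.inv_div (Or.inl ofNat_ne_top) (Or.inl two_ne_zero), div_eq_mul_inv]
        ring

end MaximalInequalities

section Poincare

variable {X : Type*} [MetricSpace X] [MeasurableSpace X] {ν μ : Measure X} {q p K : ℝ}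
  {u : X → ℝ} {g : X → ℝ≥0∞}

lemma IsWeakUpperGradient.mono_exponent (hμ : ∀ (x : X) (r : ℝ), 0 < r → μ (ball x r) < ∞)
    (hg : IsWeakUpperGradient μ p u g) {p' : ℝ} (hp' : 0 ≤ p') (hp'p : p' ≤ p) :
    IsWeakUpperGradient μ p' u g := by
  obtain ⟨hgm, ρ, hρm, hρ, hcurve⟩ := hg
  refine ⟨hgm, ρ, hρm, fun x r hr => ?_, hcurve⟩
  have hle : ∀ y, ρ y ^ p' ≤ 1 + ρ y ^ p := by
    intro y
    rcases le_or_gt (ρ y) 1 with h1 | h1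
    · exact (rpow_le_one h1 hp').trans le_self_add
    · exact (rpow_le_rpow_of_exponent_le h1.le hp'p).trans le_add_self
  calc ∫⁻ y in ball x r, ρ y ^ p' ∂μ ≤ ∫⁻ y in ball x r, (1 + ρ y ^ p) ∂μ := lintegral_mono hle
    _ = μ (ball x r) + ∫⁻ y in ball x r, ρ y ^ p ∂μ := by
        rw [lintegral_add_left measurable_const, setLIntegral_one]
    _ < ∞ := add_lt_top.2 ⟨hμ x r hr, hρ x r hr⟩

lemma ballOsc_eq_of_diam_pos (hq : 0 < q) {z : X} {r : ℝ} (hd : 0 < diam (ball z r)) :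
    ballOsc ν q u z r = (ENNReal.ofReal (diam (ball z r)))⁻¹ *
      ((ν (ball z r))⁻¹ * ∫⁻ y in ball z r,
        ENNReal.ofReal |u y - ⨍ w in ball z r, u w ∂ν| ^ q ∂ν) ^ (1 / q) := by
  have hD0 : ENNReal.ofReal (diam (ball z r)) ^ q ≠ 0 :=
    (ENNReal.rpow_pos (by simpa using hd) ofReal_ne_top).ne'
  rw [ballOsc, ← ENNReal.ofReal_rpow_of_nonneg hd.le hq.le, div_eq_mul_inv,
    ENNReal.mul_inv (Or.inl hD0) (Or.inl (rpow_ne_top_of_nonneg hq.le ofReal_ne_top)),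
    mul_left_comm, mul_comm, ENNReal.mul_rpow_of_nonneg _ _ (one_div_pos.2 hq).le,
    ENNReal.inv_rpow, ← ENNReal.rpow_mul, mul_one_div_cancel hq.ne', ENNReal.rpow_one, mul_comm,
    mul_comm (ν (ball z r))⁻¹]

lemma PoincareIneq.ballOsc_le (hPI : PoincareIneq ν μ q p K) (hq : 0 < q)
    (hν : FinitePosOnBalls ν) (hu : ∃ L : ℝ≥0, LipschitzWith L u)
    (hg : IsWeakUpperGradient μ p u g) (z : X) {r : ℝ} (hr : 0 < r) :
    ballOsc ν q u z r ≤ ENNReal.ofReal (K ^ (1 / p)) *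
      ((μ (ball z r))⁻¹ * ∫⁻ y in ball z r, g y ^ p ∂μ) ^ (1 / p) := by
  have hPB := hPI z r hr u hu g hg
  have hd0 : 0 ≤ diam (ball z r) := diam_nonneg
  rw [ENNReal.ofReal_mul' hd0] at hPB
  rcases hd0.eq_or_lt with hd | hd
  · -- `ballOsc` divides by zero here, but the Poincaré inequality forces the numerator to vanish
    rw [← hd, ENNReal.ofReal_zero, mul_zero, zero_mul, nonpos_iff_eq_zero,
      ENNReal.rpow_eq_zero_iff_of_pos (one_div_pos.2 hq), mul_eq_zero,
      ENNReal.inv_eq_zero] at hPB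
    rw [ballOsc, hPB.resolve_left (hν z r hr).2.ne, ENNReal.zero_div,
      ENNReal.zero_rpow_of_pos (one_div_pos.2 hq)]
    exact zero_le
  · rw [ballOsc_eq_of_diam_pos hq hd]
    calc _ ≤ (ENNReal.ofReal (diam (ball z r)))⁻¹ * (ENNReal.ofReal (K ^ (1 / p)) *
          ENNReal.ofReal (diam (ball z r)) *
            ((μ (ball z r))⁻¹ * ∫⁻ y in ball z r, g y ^ p ∂μ) ^ (1 / p)) := by gcongr
      _ = _ := by
        rw [mul_comm (ENNReal.ofReal (K ^ (1 / p))), mul_assoc, ← mul_assoc,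
          ENNReal.inv_mul_cancel (by simpa using hd) ofReal_ne_top, one_mul]

lemma PoincareIneq.sharpMax_rpow_le (hPI : PoincareIneq ν μ q p K) (hq : 0 < q) (hp : 0 < p)
    (hK : 0 ≤ K) (hν : FinitePosOnBalls ν) (hu : ∃ L : ℝ≥0, LipschitzWith L u)
    (hg : IsWeakUpperGradient μ p u g) {𝓑 : Set (X × ℝ)} (h𝓑 : ∀ b ∈ 𝓑, 0 < b.2) {r : ℝ}
    (hr : 0 ≤ r) (x : X) :
    sharpMax ν q 𝓑 u x ^ r ≤
      ENNReal.ofReal (K ^ (r / p)) * maximalFunction μ 𝓑 (fun y => g y ^ p) x ^ (r / p) := by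
  have hle : sharpMax ν q 𝓑 u x ≤
      ENNReal.ofReal (K ^ (1 / p)) * maximalFunction μ 𝓑 (fun y => g y ^ p) x ^ (1 / p) :=
    iSup₂_le fun b hb => iSup_le fun hx => (hPI.ballOsc_le hq hν hu hg b.1 (h𝓑 b hb)).trans
      (by gcongr; exact le_maximalFunction hb hx)
  calc sharpMax ν q 𝓑 u x ^ r
      ≤ (ENNReal.ofReal (K ^ (1 / p)) *
          maximalFunction μ 𝓑 (fun y => g y ^ p) x ^ (1 / p)) ^ r := rpow_le_rpow hle hr
    _ = _ := by
        rw [ENNReal.mul_rpow_of_nonneg _ _ hr, ← ENNReal.rpow_mul,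
          ENNReal.ofReal_rpow_of_nonneg (by positivity) hr, ← Real.rpow_mul hK, one_div_mul_eq_div]

end Poincare

theorem stmt13_general (q p ε cμ K : ℝ) (hq : 1 ≤ q)
    (hε : 0 < ε) (hεp : ε < p - 1) (hcμ : 1 < cμ) (hK : 0 < K) :
    ∃ C : ℝ, 0 < C ∧ ∀ (X : Type) [MetricSpace X] [MeasurableSpace X] [BorelSpace X]
      (ν μ : Measure X),
      FinitePosOnBalls ν → FinitePosOnBalls μ → IsDoubling μ cμ →
      PoincareIneq ν μ q (p - ε) K →
      MaxPoincareIneq ν μ q p C := by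
  have hp' : 0 < p - ε := by linarith
  set s := p / (p - ε)
  have hs : 1 < s := (one_lt_div hp').2 (by linarith)
  have hs' : 0 < s / (s - 1) := div_pos (by linarith) (by linarith)
  refine ⟨K ^ s * (2 * cμ ^ 3 * (s / (s - 1)) * 2 ^ (s - 1)), by positivity, ?_⟩
  intro X _ _ _ ν μ hν hμ hdo hPI x₀ r₀ hr₀ u hu g hg
  set 𝓑 := {b : X × ℝ | 0 < b.2 ∧ ball b.1 (2 * b.2) ⊆ ball x₀ r₀}
  have h𝓑 : ∀ b ∈ 𝓑, 0 < b.2 ∧ ball b.1 b.2 ⊆ ball x₀ r₀ :=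
    fun b hb => ⟨hb.1, (ball_subset_ball (by linarith [hb.1])).trans hb.2⟩
  have hg' := hg.mono_exponent (fun x r hr => (hμ x r hr).2) hp'.le (by linarith)
  have hpow : ∀ x, (g x ^ (p - ε)) ^ s = g x ^ p := fun x => by
    rw [← ENNReal.rpow_mul, mul_div_cancel₀ p hp'.ne']
  calc ∫⁻ x in ball x₀ r₀, sharpMax ν q 𝓑 u x ^ p ∂μ
      ≤ ∫⁻ x in ball x₀ r₀, ENNReal.ofReal (K ^ s) *
          maximalFunction μ 𝓑 (fun y => g y ^ (p - ε)) x ^ s ∂μ :=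
        lintegral_mono fun x => hPI.sharpMax_rpow_le (by linarith) hp' hK.le hν hu hg'
          (fun b hb => (h𝓑 b hb).1) (by linarith) x
    _ = ENNReal.ofReal (K ^ s) *
          ∫⁻ x in ball x₀ r₀, maximalFunction μ 𝓑 (fun y => g y ^ (p - ε)) x ^ s ∂μ :=
        lintegral_const_mul' _ _ ofReal_ne_top
    _ ≤ ENNReal.ofReal (K ^ s) * (2 * ENNReal.ofReal cμ ^ 3 * ENNReal.ofReal (s / (s - 1)) *
          2 ^ (s - 1) * ∫⁻ x in ball x₀ r₀, g x ^ p ∂μ) := by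
        gcongr
        exact (setLIntegral_maximalFunction_rpow_le hμ hdo hr₀ h𝓑
          (f := fun y => g y ^ (p - ε)) (hg.1.pow_const _) hs).trans_eq (by simp_rw [hpow])
    _ = _ := by
        rw [ENNReal.ofReal_mul (by positivity), ENNReal.ofReal_mul (by positivity),
          ENNReal.ofReal_mul (by positivity), ENNReal.ofReal_mul (by positivity),
          ENNReal.ofReal_pow (by linarith), ENNReal.ofReal_ofNat,
          ← ENNReal.ofReal_rpow_of_nonneg zero_le_two (by linarith), ENNReal.ofReal_ofNat]
        ring

/-- for `1 < p` and `0 < ε < p - 1`, a `(q, p-ε)`-Poincaré inequality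
implies a maximal `(q,p)`-Poincaré inequality, with constant depending only on the
doubling constant of `μ`, `p`, `ε`, and the constant `K` of the assumed Poincaré
inequality. -/
theorem stmt13 (q p ε cμ K : ℝ) (hq : 1 ≤ q) (hp : 1 < p)
    (hε : 0 < ε) (hεp : ε < p - 1) (hcμ : 1 < cμ) (hK : 0 < K) :
    ∃ C : ℝ, 0 < C ∧ ∀ (X : Type) [MetricSpace X] [MeasurableSpace X] [BorelSpace X]
      (ν μ : Measure X),
      FinitePosOnBalls ν → FinitePosOnBalls μ → IsDoubling μ cμ →
      PoincareIneq ν μ q (p - ε) K →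
      MaxPoincareIneq ν μ q p C :=
  stmt13_general q p ε cμ K hq hε hεp hcμ hK
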